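/- arXiv:1301.0471 — 2 statements merged into one kernel-verified Lean document; each statement's English description precedes it below -/
import Mathlib

section
/- Let p > 1, let N ≥ 1 be an integer, let f : ℝ → ℝ and g : ℝ⁴ → ℝ be C¹ functions, and let r₀ > 0, T₀ > 0. Suppose u is a C² function on the domain D = {(r,t) : 0 < t < T₀, |r − r₀| < T₀ − t, r > 0} satisfying pointwise on D: ∂²_t u = ∂²_r u + ((N−1)/r) ∂_r u + |u|^{p−1}u + f(u) + g(r, t, ∂_r u, ∂_t u). Define w(y,s) = e^{−2s/(p−1)} u(r₀ + y e^{−s}, T₀ − e^{−s}). Then for all y ∈ (−1,1) and all s > max(−log T₀, −log r₀), w satisfies pointwise: ∂²_s w = (1/ρ(y)) ∂_y( ρ(y)(1−y²) ∂_y w ) − (2(p+1)/(p−1)²) w + |w|^{p−1}w − ((p+3)/(p−1)) ∂_s w − 2y ∂²_{y s} w + e^{−s} ((N−1)/(r₀ + y e^{−s})) ∂_y w + e^{−2ps/(p−1)} f(e^{2s/(p−1)} w) + e^{−2ps/(p−1)} g( r₀ + y e^{−s}, T₀ − e^{−s}, e^{(p+1)s/(p−1)} ∂_y w, e^{(p+1)s/(p−1)}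 ( ∂_s w + y ∂_y w + (2/(p−1)) w ) ). -/
/-!
For any exponent `c`, the chain rule gives `∂_y S_c V = S_{c+1} ∂_r V` and
`∂_s S_c V = -c S_c V + S_{c+1} ∂_t V - y S_{c+1} ∂_r V` for the similarity transform
`S_c V (y, s) = e^{-cs} V(r₀ + y e^{-s}, T₀ - e^{-s})`. Since `w = S_c u` with `c = 2/(p-1)`,
applying these rules twice expresses every term of (eqw) through the partial derivatives of `u`
at `(r, t) = (r₀ + y e^{-s}, T₀ - e^{-s})`. Using `(ρ (1 - y²))' = -2 (c + 1) y ρ`, the symmetry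
of the mixed partials and `c (p - 1) = 2`, (eqw) becomes `e^{-2ps/(p-1)}` times the wave equation
at `(r, t)`.
-/

open MeasureTheory Real Set

/-- The weight `ρ(y) = (1-y²)^{2/(p-1)}`. -/
noncomputable def rho (p : ℝ) (y : ℝ) : ℝ := (1 - y ^ 2) ^ (2 / (p - 1))

/-- Equation (eqw) in similarity variables, with parameters `(r₀, T₀, N, f, g)`,
satisfied at the point `(y,s)` by the function `w`. -/
def SatisfiesEqw (p : ℝ) (N : ℕ) (f : ℝ → ℝ) (g : ℝ → ℝ → ℝ → ℝ → ℝ)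
    (r₀ T₀ : ℝ) (w : ℝ → ℝ → ℝ) (y s : ℝ) : Prop :=
  deriv (fun s' => deriv (fun s'' => w y s'') s') s =
    (1 / rho p y) *
        deriv (fun z => rho p z * (1 - z ^ 2) * deriv (fun z' => w z' s) z) y
      - (2 * (p + 1) / (p - 1) ^ 2) * w y s
      + |w y s| ^ (p - 1) * w y s
      - ((p + 3) / (p - 1)) * deriv (fun s' => w y s') s
      - 2 * y * deriv (fun z => deriv (fun s' => w z s') s) y
      + Real.exp (-s) * (((N : ℝ) - 1) / (r₀ + y * Real.exp (-s))) *
          deriv (fun z => w z s) y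
      + Real.exp (-2 * p * s / (p - 1)) * f (Real.exp (2 * s / (p - 1)) * w y s)
      + Real.exp (-2 * p * s / (p - 1)) *
          g (r₀ + y * Real.exp (-s)) (T₀ - Real.exp (-s))
            (Real.exp ((p + 1) * s / (p - 1)) * deriv (fun z => w z s) y)
            (Real.exp ((p + 1) * s / (p - 1)) *
              (deriv (fun s' => w y s') s + y * deriv (fun z => w z s) y
                + (2 / (p - 1)) * w y s))

open Filter Topology

noncomputable def partialFst (V : ℝ × ℝ → ℝ) (x : ℝ × ℝ) : ℝ := fderiv ℝ V x (1, 0)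

noncomputable def partialSnd (V : ℝ × ℝ → ℝ) (x : ℝ × ℝ) : ℝ := fderiv ℝ V x (0, 1)

theorem HasFDerivAt.hasDerivAt_comp_prodMk {V : ℝ × ℝ → ℝ} {L : ℝ × ℝ →L[ℝ] ℝ}
    {a b : ℝ → ℝ} {a' b' τ : ℝ} (hV : HasFDerivAt V L (a τ, b τ))
    (ha : HasDerivAt a a' τ) (hb : HasDerivAt b b' τ) :
    HasDerivAt (fun σ => V (a σ, b σ)) (a' * L (1, 0) + b' * L (0, 1)) τ := by
  refine (hV.comp_hasDerivAt τ (ha.prodMk hb)).congr_deriv ?_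
  rw [show ((a', b') : ℝ × ℝ) = a' • ((1 : ℝ), (0 : ℝ)) + b' • ((0 : ℝ), (1 : ℝ)) by simp,
    map_add, map_smul, map_smul, smul_eq_mul, smul_eq_mul]

theorem DifferentiableAt.hasDerivAt_comp_prodMk {V : ℝ × ℝ → ℝ}
    {a b : ℝ → ℝ} {a' b' τ : ℝ} (hV : DifferentiableAt ℝ V (a τ, b τ))
    (ha : HasDerivAt a a' τ) (hb : HasDerivAt b b' τ) :
    HasDerivAt (fun σ => V (a σ, b σ))
      (a' * partialFst V (a τ, b τ) + b' * partialSnd V (a τ, b τ)) τ :=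
  hV.hasFDerivAt.hasDerivAt_comp_prodMk ha hb

section PartialDerivatives

variable {V : ℝ × ℝ → ℝ} {D : Set (ℝ × ℝ)}

theorem hasDerivAt_slice_fst {r t : ℝ} (hV : DifferentiableAt ℝ V (r, t)) :
    HasDerivAt (fun r' => V (r', t)) (partialFst V (r, t)) r := by
  simpa using hV.hasDerivAt_comp_prodMk (hasDerivAt_id r) (hasDerivAt_const r t)

theorem hasDerivAt_slice_snd {r t : ℝ} (hV : DifferentiableAt ℝ V (r, t)) :
    HasDerivAt (fun t' => V (r, t')) (partialSnd V (r, t)) t := by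
  simpa using hV.hasDerivAt_comp_prodMk (hasDerivAt_const t r) (hasDerivAt_id t)

theorem IsOpen.eventually_slice_fst_mem (hD : IsOpen D) {r t : ℝ} (hx : (r, t) ∈ D) :
    ∀ᶠ r' in 𝓝 r, (r', t) ∈ D :=
  (continuous_id.prodMk continuous_const).continuousAt.preimage_mem_nhds (hD.mem_nhds hx)

theorem IsOpen.eventually_slice_snd_mem (hD : IsOpen D) {r t : ℝ} (hx : (r, t) ∈ D) :
    ∀ᶠ t' in 𝓝 t, (r, t') ∈ D :=
  (continuous_const.prodMk continuous_id).continuousAt.preimage_mem_nhds (hD.mem_nhds hx)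

theorem ContDiffOn.partialFst {m n : WithTop ℕ∞} (hV : ContDiffOn ℝ n V D) (hD : IsOpen D)
    (hmn : m + 1 ≤ n) : ContDiffOn ℝ m (partialFst V) D :=
  (hV.fderiv_of_isOpen hD hmn).clm_apply contDiffOn_const

theorem ContDiffOn.partialSnd {m n : WithTop ℕ∞} (hV : ContDiffOn ℝ n V D) (hD : IsOpen D)
    (hmn : m + 1 ≤ n) : ContDiffOn ℝ m (partialSnd V) D :=
  (hV.fderiv_of_isOpen hD hmn).clm_apply contDiffOn_const

theorem ContDiffOn.differentiableAt_of_isOpen {n : WithTop ℕ∞} (hV : ContDiffOn ℝ n V D)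
    (hD : IsOpen D) (hn : n ≠ 0) {x : ℝ × ℝ} (hx : x ∈ D) : DifferentiableAt ℝ V x :=
  (hV.differentiableOn hn).differentiableAt (hD.mem_nhds hx)

theorem deriv_deriv_slice_fst (hD : IsOpen D) (hV : ContDiffOn ℝ 2 V D) {r t : ℝ}
    (hx : (r, t) ∈ D) :
    deriv (fun r' => deriv (fun r'' => V (r'', t)) r') r = partialFst (partialFst V) (r, t) := by
  rw [EventuallyEq.deriv_eq (f := fun r' => partialFst V (r', t))]
  · exact (hasDerivAt_slice_fst
      ((hV.partialFst hD (m := 1) (by norm_num)).differentiableAt_of_isOpen hD one_ne_zero hx)).deriv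
  · filter_upwards [hD.eventually_slice_fst_mem hx] with r' hr'
    exact (hasDerivAt_slice_fst (hV.differentiableAt_of_isOpen hD two_ne_zero hr')).deriv

theorem deriv_deriv_slice_snd (hD : IsOpen D) (hV : ContDiffOn ℝ 2 V D) {r t : ℝ}
    (hx : (r, t) ∈ D) :
    deriv (fun t' => deriv (fun t'' => V (r, t'')) t') t = partialSnd (partialSnd V) (r, t) := by
  rw [EventuallyEq.deriv_eq (f := fun t' => partialSnd V (r, t'))]
  · exact (hasDerivAt_slice_snd
      ((hV.partialSnd hD (m := 1) (by norm_num)).differentiableAt_of_isOpen hD one_ne_zero hx)).deriv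
  · filter_upwards [hD.eventually_slice_snd_mem hx] with t' ht'
    exact (hasDerivAt_slice_snd (hV.differentiableAt_of_isOpen hD two_ne_zero ht')).deriv

theorem fderiv_fderiv_apply {x : ℝ × ℝ} (h : DifferentiableAt ℝ (fderiv ℝ V) x) (v w : ℝ × ℝ) :
    fderiv ℝ (fun x' => fderiv ℝ V x' v) x w = fderiv ℝ (fderiv ℝ V) x w v := by
  rw [fderiv_clm_apply h (differentiableAt_const v)]
  simp

theorem partialSnd_partialFst (hD : IsOpen D) (hV : ContDiffOn ℝ 2 V D) {x : ℝ × ℝ}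
    (hx : x ∈ D) : partialSnd (partialFst V) x = partialFst (partialSnd V) x := by
  have hV₂ := hV.contDiffAt (hD.mem_nhds hx)
  have hd : DifferentiableAt ℝ (fderiv ℝ V) x :=
    (hV₂.fderiv_right (m := 1) le_rfl).differentiableAt one_ne_zero
  change fderiv ℝ (fun x => fderiv ℝ V x (1, 0)) x (0, 1)
    = fderiv ℝ (fun x => fderiv ℝ V x (0, 1)) x (1, 0)
  rw [fderiv_fderiv_apply hd, fderiv_fderiv_apply hd]
  exact hV₂.isSymmSndFDerivAt (by simp) _ _

end PartialDerivatives

noncomputable def similarityPoint (r₀ T₀ y s : ℝ) : ℝ × ℝ := (r₀ + y * exp (-s), T₀ - exp (-s))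

noncomputable def similarityTransform (c r₀ T₀ : ℝ) (V : ℝ × ℝ → ℝ) (y s : ℝ) : ℝ :=
  exp (-c * s) * V (similarityPoint r₀ T₀ y s)

noncomputable def similarityTransformDerivS (c r₀ T₀ : ℝ) (V : ℝ × ℝ → ℝ) (y s : ℝ) : ℝ :=
  -c * similarityTransform c r₀ T₀ V y s + similarityTransform (c + 1) r₀ T₀ (partialSnd V) y s
    - y * similarityTransform (c + 1) r₀ T₀ (partialFst V) y s

section SimilarityTransform

variable {c r₀ T₀ y s : ℝ} {V : ℝ × ℝ → ℝ} {D : Set (ℝ × ℝ)}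

theorem similarityTransform_add_one :
    similarityTransform (c + 1) r₀ T₀ V y s = exp (-s) * similarityTransform c r₀ T₀ V y s := by
  rw [similarityTransform, similarityTransform, ← mul_assoc, ← exp_add]
  ring_nf

theorem exp_mul_similarityTransform :
    exp (c * s) * similarityTransform c r₀ T₀ V y s = V (similarityPoint r₀ T₀ y s) := by
  rw [similarityTransform, ← mul_assoc, ← exp_add]
  simp

theorem abs_similarityTransform_rpow_mul {q : ℝ} :
    |similarityTransform c r₀ T₀ V y s| ^ q * similarityTransform c r₀ T₀ V y s
      = similarityTransform (c * (q + 1)) r₀ T₀ (fun x => |V x| ^ q * V x) y s := by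
  simp only [similarityTransform]
  rw [abs_mul, abs_of_pos (exp_pos _), mul_rpow (exp_pos _).le (abs_nonneg _), ← exp_mul,
    show -(c * (q + 1)) * s = -c * s * q + -c * s by ring, exp_add]
  ring

theorem similarityTransformDerivS_add_mul_add_mul :
    similarityTransformDerivS c r₀ T₀ V y s
        + y * similarityTransform (c + 1) r₀ T₀ (partialFst V) y s
        + c * similarityTransform c r₀ T₀ V y s
      = similarityTransform (c + 1) r₀ T₀ (partialSnd V) y s := by
  rw [similarityTransformDerivS]
  ring

theorem hasDerivAt_similarityTransform_fst (hV : DifferentiableAt ℝ V (similarityPoint r₀ T₀ y s)) :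
    HasDerivAt (fun z => similarityTransform c r₀ T₀ V z s)
      (similarityTransform (c + 1) r₀ T₀ (partialFst V) y s) y := by
  have h := (hV.hasDerivAt_comp_prodMk (((hasDerivAt_id y).mul_const (exp (-s))).const_add r₀)
    (hasDerivAt_const y (T₀ - exp (-s)))).const_mul (exp (-c * s))
  refine h.congr_deriv ?_
  rw [similarityTransform_add_one]
  simp only [similarityTransform, similarityPoint, id]
  ring

theorem hasDerivAt_similarityTransform_snd (hV : DifferentiableAt ℝ V (similarityPoint r₀ T₀ y s)) :
    HasDerivAt (fun σ => similarityTransform c r₀ T₀ V y σ)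
      (similarityTransformDerivS c r₀ T₀ V y s) s := by
  have hexp : HasDerivAt (fun σ => exp (-σ)) (-exp (-s)) s := by
    simpa using (hasDerivAt_neg s).exp
  have hexpc : HasDerivAt (fun σ => exp (-c * σ)) (exp (-c * s) * -c) s := by
    simpa using ((hasDerivAt_id s).const_mul (-c)).exp
  have h := hexpc.mul (hV.hasDerivAt_comp_prodMk ((hexp.const_mul y).const_add r₀)
    (hexp.const_sub T₀))
  refine h.congr_deriv ?_
  simp only [similarityTransformDerivS, similarityTransform_add_one]
  simp only [similarityTransform, similarityPoint]
  ring

theorem IsOpen.eventually_similarityPoint_mem_fst (hD : IsOpen D) (hX : similarityPoint r₀ T₀ y s ∈ D) :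
    ∀ᶠ z in 𝓝 y, similarityPoint r₀ T₀ z s ∈ D :=
  (show Continuous fun z => similarityPoint r₀ T₀ z s by unfold similarityPoint; fun_prop).continuousAt
    |>.preimage_mem_nhds (hD.mem_nhds hX)

theorem IsOpen.eventually_similarityPoint_mem_snd (hD : IsOpen D) (hX : similarityPoint r₀ T₀ y s ∈ D) :
    ∀ᶠ σ in 𝓝 s, similarityPoint r₀ T₀ y σ ∈ D :=
  (show Continuous fun σ => similarityPoint r₀ T₀ y σ by unfold similarityPoint; fun_prop).continuousAt
    |>.preimage_mem_nhds (hD.mem_nhds hX)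

theorem hasDerivAt_deriv_similarityTransform_fst (hD : IsOpen D) (hV : ContDiffOn ℝ 2 V D)
    (hX : similarityPoint r₀ T₀ y s ∈ D) :
    HasDerivAt (fun z => deriv (fun z' => similarityTransform c r₀ T₀ V z' s) z)
      (similarityTransform (c + 1 + 1) r₀ T₀ (partialFst (partialFst V)) y s) y := by
  refine (hasDerivAt_similarityTransform_fst ((hV.partialFst hD (m := 1) (by norm_num))
    |>.differentiableAt_of_isOpen hD one_ne_zero hX)).congr_of_eventuallyEq ?_
  filter_upwards [hD.eventually_similarityPoint_mem_fst hX] with z hz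
  exact (hasDerivAt_similarityTransform_fst (hV.differentiableAt_of_isOpen hD two_ne_zero hz)).deriv

theorem hasDerivAt_deriv_similarityTransform_snd_fst (hD : IsOpen D) (hV : ContDiffOn ℝ 2 V D)
    (hX : similarityPoint r₀ T₀ y s ∈ D) :
    HasDerivAt (fun z => deriv (fun σ => similarityTransform c r₀ T₀ V z σ) s)
      (-c * similarityTransform (c + 1) r₀ T₀ (partialFst V) y s
        + similarityTransform (c + 1 + 1) r₀ T₀ (partialFst (partialSnd V)) y s
        - (similarityTransform (c + 1) r₀ T₀ (partialFst V) y s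
          + y * similarityTransform (c + 1 + 1) r₀ T₀ (partialFst (partialFst V)) y s)) y := by
  have hdiff {W : ℝ × ℝ → ℝ} (hW : ContDiffOn ℝ 1 W D) :
      DifferentiableAt ℝ W (similarityPoint r₀ T₀ y s) :=
    hW.differentiableAt_of_isOpen hD one_ne_zero hX
  have h := (((hasDerivAt_similarityTransform_fst (c := c)
    (hdiff (hV.of_le (by norm_num)))).const_mul (-c)).add
    (hasDerivAt_similarityTransform_fst (c := c + 1) (hdiff (hV.partialSnd hD (by norm_num))))).sub
    ((hasDerivAt_id y).mul
      (hasDerivAt_similarityTransform_fst (c := c + 1) (hdiff (hV.partialFst hD (by norm_num)))))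
  refine (h.congr_deriv (by simp only [id]; ring)).congr_of_eventuallyEq ?_
  filter_upwards [hD.eventually_similarityPoint_mem_fst hX] with z hz
  exact (hasDerivAt_similarityTransform_snd (hV.differentiableAt_of_isOpen hD two_ne_zero hz)).deriv

theorem hasDerivAt_deriv_similarityTransform_snd (hD : IsOpen D) (hV : ContDiffOn ℝ 2 V D)
    (hX : similarityPoint r₀ T₀ y s ∈ D) :
    HasDerivAt (fun σ => deriv (fun σ' => similarityTransform c r₀ T₀ V y σ') σ)
      (-c * similarityTransformDerivS c r₀ T₀ V y s
        + similarityTransformDerivS (c + 1) r₀ T₀ (partialSnd V) y s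
        - y * similarityTransformDerivS (c + 1) r₀ T₀ (partialFst V) y s) s := by
  have hdiff {W : ℝ × ℝ → ℝ} (hW : ContDiffOn ℝ 1 W D) :
      DifferentiableAt ℝ W (similarityPoint r₀ T₀ y s) :=
    hW.differentiableAt_of_isOpen hD one_ne_zero hX
  have h := (((hasDerivAt_similarityTransform_snd (c := c)
    (hdiff (hV.of_le (by norm_num)))).const_mul (-c)).add
    (hasDerivAt_similarityTransform_snd (c := c + 1) (hdiff (hV.partialSnd hD (by norm_num))))).sub
    ((hasDerivAt_similarityTransform_snd (c := c + 1)
      (hdiff (hV.partialFst hD (by norm_num)))).const_mul y)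
  refine h.congr_of_eventuallyEq ?_
  filter_upwards [hD.eventually_similarityPoint_mem_snd hX] with σ hσ
  exact (hasDerivAt_similarityTransform_snd (hV.differentiableAt_of_isOpen hD two_ne_zero hσ)).deriv

end SimilarityTransform

theorem one_sub_sq_pos {y : ℝ} (hy : y ∈ Ioo (-1 : ℝ) 1) : 0 < 1 - y ^ 2 := by
  nlinarith [hy.1, hy.2]

theorem hasDerivAt_rho_mul_one_sub_sq (p : ℝ) {y : ℝ} (hy : y ∈ Ioo (-1 : ℝ) 1) :
    HasDerivAt (fun z => rho p z * (1 - z ^ 2)) (-(2 * (2 / (p - 1) + 1)) * y * rho p y) y := by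
  have h := ((hasDerivAt_pow 2 y).const_sub 1).rpow_const (p := 2 / (p - 1) + 1)
    (Or.inl (one_sub_sq_pos hy).ne')
  rw [add_sub_cancel_right] at h
  refine (h.congr_deriv (by rw [rho]; push_cast; ring)).congr_of_eventuallyEq ?_
  filter_upwards [isOpen_Ioo.mem_nhds hy] with z hz
  rw [rho, rpow_add_one (one_sub_sq_pos hz).ne']

theorem inv_rho_mul_deriv_rho_mul_one_sub_sq_mul (p : ℝ) {y F' : ℝ} {F : ℝ → ℝ}
    (hy : y ∈ Ioo (-1 : ℝ) 1) (hF : HasDerivAt F F' y) :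
    1 / rho p y * deriv (fun z => rho p z * (1 - z ^ 2) * F z) y
      = (1 - y ^ 2) * F' - 2 * (2 / (p - 1) + 1) * y * F y := by
  have hρ : 0 < rho p y := rpow_pos_of_pos (one_sub_sq_pos hy) _
  have h : HasDerivAt (fun z => rho p z * (1 - z ^ 2) * F z) _ y :=
    (hasDerivAt_rho_mul_one_sub_sq p hy).mul hF
  rw [h.deriv]
  field_simp
  ring

def backwardCone (r₀ T₀ : ℝ) : Set (ℝ × ℝ) :=
  {x | 0 < x.2 ∧ x.2 < T₀ ∧ |x.1 - r₀| < T₀ - x.2 ∧ 0 < x.1}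

theorem isOpen_backwardCone (r₀ T₀ : ℝ) : IsOpen (backwardCone r₀ T₀) :=
  (isOpen_lt continuous_const continuous_snd).inter <|
    (isOpen_lt continuous_snd continuous_const).inter <|
      (isOpen_lt (continuous_fst.sub continuous_const).abs (continuous_const.sub continuous_snd)).inter
        (isOpen_lt continuous_const continuous_fst)

theorem similarityPoint_mem_backwardCone {r₀ T₀ y s : ℝ} (hr₀ : 0 < r₀) (hT₀ : 0 < T₀)
    (hy : y ∈ Ioo (-1 : ℝ) 1) (hs : max (-log T₀) (-log r₀) < s) :
    similarityPoint r₀ T₀ y s ∈ backwardCone r₀ T₀ := by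
  rw [max_lt_iff, neg_lt (a := log T₀), neg_lt (a := log r₀), lt_log_iff_exp_lt hT₀,
    lt_log_iff_exp_lt hr₀] at hs
  have he := exp_pos (-s)
  have hy' : |y| * exp (-s) < exp (-s) := mul_lt_of_lt_one_left he (abs_lt.2 hy)
  refine ⟨by simpa [similarityPoint] using hs.1, by simpa [similarityPoint] using he, ?_, ?_⟩
  · simpa [similarityPoint, abs_mul, abs_of_pos he] using hy'
  · simp only [similarityPoint]
    nlinarith [neg_abs_le y, hs.2]

theorem similarity_variables_equation_general
    (p : ℝ) (hp : 1 < p) (N : ℕ)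
    (f : ℝ → ℝ) (g : ℝ → ℝ → ℝ → ℝ → ℝ)
    (r₀ T₀ : ℝ) (hr₀ : 0 < r₀) (hT₀ : 0 < T₀)
    (u : ℝ → ℝ → ℝ)
    (hu : ContDiffOn ℝ 2 (fun x : ℝ × ℝ => u x.1 x.2)
      {x : ℝ × ℝ | 0 < x.2 ∧ x.2 < T₀ ∧ |x.1 - r₀| < T₀ - x.2 ∧ 0 < x.1})
    (hueq : ∀ r t : ℝ, 0 < t → t < T₀ → |r - r₀| < T₀ - t → 0 < r →
      deriv (fun t' => deriv (fun t'' => u r t'') t') t =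
        deriv (fun r' => deriv (fun r'' => u r'' t) r') r
          + (((N : ℝ) - 1) / r) * deriv (fun r' => u r' t) r
          + |u r t| ^ (p - 1) * u r t
          + f (u r t)
          + g r t (deriv (fun r' => u r' t) r) (deriv (fun t' => u r t') t))
    (w : ℝ → ℝ → ℝ)
    (hw : ∀ y s : ℝ, w y s =
      Real.exp (-2 * s / (p - 1)) * u (r₀ + y * Real.exp (-s)) (T₀ - Real.exp (-s))) :
    ∀ y ∈ Ioo (-1 : ℝ) 1, ∀ s : ℝ, max (-Real.log T₀) (-Real.log r₀) < s →
      SatisfiesEqw p N f g r₀ T₀ w y s := by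
  intro y hy s hs
  have hp₁ : p - 1 ≠ 0 := by linarith
  set κ := 2 / (p - 1) with hκ
  set U : ℝ × ℝ → ℝ := fun x => u x.1 x.2
  have hD := isOpen_backwardCone r₀ T₀
  change ContDiffOn ℝ 2 U (backwardCone r₀ T₀) at hu
  obtain rfl : w = similarityTransform κ r₀ T₀ U := funext₂ fun z σ => by
    rw [hw, similarityTransform, hκ]
    congr 2
    ring
  have hX := similarityPoint_mem_backwardCone hr₀ hT₀ hy hs
  have hU₁ := hu.differentiableAt_of_isOpen hD two_ne_zero hX
  have hpde := hueq _ _ hX.1 hX.2.1 hX.2.2.1 hX.2.2.2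
  dsimp only [similarityPoint] at hpde hU₁
  rw [deriv_deriv_slice_snd hD hu hX, deriv_deriv_slice_fst hD hu hX,
    (hasDerivAt_slice_fst hU₁).deriv, (hasDerivAt_slice_snd hU₁).deriv] at hpde
  unfold SatisfiesEqw
  rw [(hasDerivAt_deriv_similarityTransform_snd hD hu hX).deriv,
    (hasDerivAt_deriv_similarityTransform_snd_fst hD hu hX).deriv,
    inv_rho_mul_deriv_rho_mul_one_sub_sq_mul p hy
      (hasDerivAt_deriv_similarityTransform_fst hD hu hX),
    (hasDerivAt_similarityTransform_snd hU₁).deriv, (hasDerivAt_similarityTransform_fst hU₁).deriv,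
    similarityTransformDerivS_add_mul_add_mul, abs_similarityTransform_rpow_mul]
  rw [← hκ, show 2 * (p + 1) / (p - 1) ^ 2 = κ * (κ + 1) by rw [hκ]; field_simp; ring,
    show (p + 3) / (p - 1) = 2 * κ + 1 by rw [hκ]; field_simp; ring,
    show κ * (p - 1 + 1) = κ + 1 + 1 by rw [hκ]; field_simp; ring,
    show 2 * s / (p - 1) = κ * s by ring,
    show (p + 1) * s / (p - 1) = (κ + 1) * s by rw [hκ]; field_simp; ring,
    show -2 * p * s / (p - 1) = -s + (-s + -κ * s) by rw [hκ]; field_simp; ring, exp_add, exp_add,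
    exp_mul_similarityTransform, exp_mul_similarityTransform, exp_mul_similarityTransform]
  simp only [similarityTransformDerivS, similarityTransform_add_one]
  simp only [similarityTransform]
  rw [partialSnd_partialFst hD hu hX]
  simp only [similarityPoint]
  linear_combination (exp (-s) * (exp (-s) * exp (-κ * s))) * hpde

/-- If `u` is a `C²` solution of the perturbed radial wave equation on the backward
light cone with vertex `(r₀,T₀)` (intersected with `{r > 0}`), then its similarity
variables version `w(y,s) = e^{-2s/(p-1)} u(r₀ + y e^{-s}, T₀ - e^{-s})`
satisfies equation (eqw) for `y ∈ (-1,1)` and `s > max(-log T₀, -log r₀)`. -/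
theorem similarity_variables_equation
    (p : ℝ) (hp : 1 < p) (N : ℕ) (hN : 1 ≤ N)
    (f : ℝ → ℝ) (g : ℝ → ℝ → ℝ → ℝ → ℝ)
    (hf : ContDiff ℝ 1 f)
    (hg : ContDiff ℝ 1 (fun x : ℝ × ℝ × ℝ × ℝ => g x.1 x.2.1 x.2.2.1 x.2.2.2))
    (r₀ T₀ : ℝ) (hr₀ : 0 < r₀) (hT₀ : 0 < T₀)
    (u : ℝ → ℝ → ℝ)
    (hu : ContDiffOn ℝ 2 (fun x : ℝ × ℝ => u x.1 x.2)
      {x : ℝ × ℝ | 0 < x.2 ∧ x.2 < T₀ ∧ |x.1 - r₀| < T₀ - x.2 ∧ 0 < x.1})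
    (hueq : ∀ r t : ℝ, 0 < t → t < T₀ → |r - r₀| < T₀ - t → 0 < r →
      deriv (fun t' => deriv (fun t'' => u r t'') t') t =
        deriv (fun r' => deriv (fun r'' => u r'' t) r') r
          + (((N : ℝ) - 1) / r) * deriv (fun r' => u r' t) r
          + |u r t| ^ (p - 1) * u r t
          + f (u r t)
          + g r t (deriv (fun r' => u r' t) r) (deriv (fun t' => u r t') t))
    (w : ℝ → ℝ → ℝ)
    (hw : ∀ y s : ℝ, w y s =
      Real.exp (-2 * s / (p - 1)) * u (r₀ + y * Real.exp (-s)) (T₀ - Real.exp (-s))) :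
    ∀ y ∈ Ioo (-1 : ℝ) 1, ∀ s : ℝ, max (-Real.log T₀) (-Real.log r₀) < s →
      SatisfiesEqw p N f g r₀ T₀ w y s :=
  similarity_variables_equation_general p hp N f g r₀ T₀ hr₀ hT₀ u hu hueq w hw
end

section
/- Let p > 1, M > 0, and let g : ℝ⁴ → ℝ satisfy |g(X,t,v,z)| ≤ M(1+|v|+|z|) for all (X,t,v,z) ∈ ℝ⁴. Then there exists C = C(p,M) > 0 such that for all r₀ > 0, all T₀ ∈ ℝ, all s ≥ 0, every C¹ function w : (−1,1) → ℝ and every measurable function v : (−1,1) → ℝ: | ∫_{−1}^{1} e^{−2ps/(p−1)} g( r₀ + y e^{−s}, T₀ − e^{−s}, e^{(p+1)s/(p−1)} w'(y), e^{(p+1)s/(p−1)} ( v(y) + y w'(y) + (2/(p−1)) w(y) ) ) v(y) ρ(y) dy | ≤ C e^{−s} ∫_{−1}^{1} ( (w'(y))² (1−y²) + v(y)²/(1−y²) + w(y)² ) ρ(y) dy + C e^{−s}. -/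
/-!
Write `a = |w'|`, `b = |v|`, `c = |w|`, `τ = 1 - y²`. The growth bound on `g` and `|y| < 1` give
`|integrand| ≤ M ρ (e^{-2ps/(p-1)} b + e^{-s} (2ab + b² + κ bc))` with `κ = 2/(p-1)`, because
`e^{-2ps/(p-1)} e^{(p+1)s/(p-1)} = e^{-s}`. Young's inequality in the form `2ab ≤ a²τ + b²/τ`,
`e^{-2ps/(p-1)} ≤ e^{-s}` and `0 ≤ ρ ≤ 1` bound this by `C e^{-s} ((a²τ + b²/τ + c²) ρ + 1)`;
integrating over an interval of length `2` gives the claim.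
-/

open MeasureTheory Real Set

lemma rho_nonneg (p : ℝ) {y : ℝ} (hy : y ∈ Ioo (-1 : ℝ) 1) : 0 ≤ rho p y :=
  rpow_nonneg (by nlinarith [hy.1, hy.2]) _

lemma rho_le_one {p : ℝ} (hp : 1 ≤ p) {y : ℝ} (hy : y ∈ Ioo (-1 : ℝ) 1) : rho p y ≤ 1 :=
  rpow_le_one (by nlinarith [hy.1, hy.2]) (by nlinarith) (div_nonneg zero_le_two (by linarith))

lemma exp_neg_two_mul_div_mul_exp_add_one_mul_div {p : ℝ} (hp : p ≠ 1) (s : ℝ) :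
    exp (-2 * p * s / (p - 1)) * exp ((p + 1) * s / (p - 1)) = exp (-s) := by
  have : p - 1 ≠ 0 := sub_ne_zero.2 hp
  rw [← exp_add]
  congr 1
  field_simp
  ring

lemma abs_add_mul_add_mul_le {y d v w κ : ℝ} (hy : |y| ≤ 1) (hκ : 0 ≤ κ) :
    |v + y * d + κ * w| ≤ |v| + |d| + κ * |w| := by
  have hyd : |y * d| ≤ |d| := by
    rw [abs_mul]
    exact mul_le_of_le_one_left (abs_nonneg d) hy
  calc |v + y * d + κ * w| ≤ |v| + |y * d| + |κ * w| := abs_add_three _ _ _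
    _ ≤ |v| + |d| + κ * |w| := by rw [abs_mul κ, abs_of_nonneg hκ]; linarith

lemma add_mul_add_sq_add_mul_le {κ τ : ℝ} (a b c : ℝ) (hκ : 0 ≤ κ) (hτ : 0 < τ) (hτ1 : τ ≤ 1) :
    b + 2 * a * b + b ^ 2 + κ * (b * c) ≤ (3 + κ) * (a ^ 2 * τ + b ^ 2 / τ + c ^ 2 + 1) := by
  have hsq : b ^ 2 ≤ b ^ 2 / τ := le_div_self (sq_nonneg b) hτ hτ1
  have hyoung : 2 * a * b ≤ a ^ 2 * τ + b ^ 2 / τ := by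
    have : 0 ≤ (a * τ - b) ^ 2 / τ := div_nonneg (sq_nonneg _) hτ.le
    have expand : (a * τ - b) ^ 2 / τ = a ^ 2 * τ + b ^ 2 / τ - 2 * a * b := by
      field_simp
      ring
    linarith
  have hlin : 2 * b ≤ b ^ 2 + 1 := by nlinarith [sq_nonneg (b - 1)]
  have hbc : 2 * (b * c) ≤ b ^ 2 + c ^ 2 := by nlinarith [sq_nonneg (b - c)]
  have ha : 0 ≤ a ^ 2 * τ := by positivity
  have hB : 0 ≤ b ^ 2 / τ := by positivity
  have hc2 : 0 ≤ c ^ 2 := sq_nonneg c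
  linarith [mul_le_mul_of_nonneg_left hbc hκ, mul_le_mul_of_nonneg_left hsq hκ,
    mul_nonneg hκ ha, mul_nonneg hκ hB, mul_nonneg hκ hc2]

lemma abs_mul_growth_le {M κ E K τ ρ y d v w G : ℝ} (hM : 0 ≤ M) (hκ : 0 ≤ κ) (hE : 0 ≤ E)
    (hK : 1 ≤ K) (hτ : 0 < τ) (hτ1 : τ ≤ 1) (hρ : 0 ≤ ρ) (hρ1 : ρ ≤ 1) (hy : |y| ≤ 1)
    (hG : |G| ≤ M * (1 + |K * d| + |K * (v + y * d + κ * w)|)) :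
    |E * G * v * ρ| ≤
      M * (3 + κ) * (E * K) * ((d ^ 2 * τ + v ^ 2 / τ + w ^ 2) * ρ) + M * (3 + κ) * (E * K) := by
  have hK0 : 0 ≤ K := zero_le_one.trans hK
  have hG' : |G| ≤ M * (1 + K * (2 * |d| + |v| + κ * |w|)) := by
    refine hG.trans (mul_le_mul_of_nonneg_left ?_ hM)
    rw [abs_mul, abs_mul, abs_of_nonneg hK0]
    nlinarith [abs_add_mul_add_mul_le (d := d) (v := v) (w := w) hy hκ]
  have hEK : E ≤ E * K := le_mul_of_one_le_right hE hK
  calc |E * G * v * ρ| = E * |G| * |v| * ρ := by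
        rw [abs_mul, abs_mul, abs_mul, abs_of_nonneg hE, abs_of_nonneg hρ]
    _ ≤ E * (M * (1 + K * (2 * |d| + |v| + κ * |w|))) * |v| * ρ := by gcongr
    _ = M * ρ * (E * |v| + E * K * (2 * |d| * |v| + |v| ^ 2 + κ * (|v| * |w|))) := by ring
    _ ≤ M * ρ * (E * K * (|v| + 2 * |d| * |v| + |v| ^ 2 + κ * (|v| * |w|))) := by
        refine mul_le_mul_of_nonneg_left ?_ (by positivity)
        nlinarith [abs_nonneg v]
    _ ≤ M * ρ * (E * K * ((3 + κ) * (d ^ 2 * τ + v ^ 2 / τ + w ^ 2 + 1))) := by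
        gcongr
        simpa only [sq_abs] using
          add_mul_add_sq_add_mul_le |d| |v| |w| hκ hτ hτ1
    _ = M * (3 + κ) * (E * K) * ((d ^ 2 * τ + v ^ 2 / τ + w ^ 2) * ρ)
          + M * (3 + κ) * (E * K) * ρ := by ring
    _ ≤ _ := by
        have : 0 ≤ M * (3 + κ) * (E * K) := by positivity
        nlinarith

lemma ofReal_abs_setIntegral_le {α : Type*} [MeasurableSpace α] {μ : Measure α} {s : Set α}
    (hs : MeasurableSet s) {f F : α → ℝ} {a b : ℝ} (ha : 0 ≤ a)
    (h : ∀ x ∈ s, |f x| ≤ a * F x + b) :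
    ENNReal.ofReal |∫ x in s, f x ∂μ| ≤
      ENNReal.ofReal a * ∫⁻ x in s, ENNReal.ofReal (F x) ∂μ + ENNReal.ofReal b * μ s := by
  have hpt : ∀ x ∈ s, ENNReal.ofReal |f x| ≤
      ENNReal.ofReal a * ENNReal.ofReal (F x) + ENNReal.ofReal b := fun x hx => by
    rw [← ENNReal.ofReal_mul ha]
    exact (ENNReal.ofReal_le_ofReal (h x hx)).trans ENNReal.ofReal_add_le
  calc ENNReal.ofReal |∫ x in s, f x ∂μ| ≤ ∫⁻ x in s, ENNReal.ofReal |f x| ∂μ := by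
        simpa only [← Real.enorm_eq_ofReal_abs] using enorm_integral_le_lintegral_enorm f
    _ ≤ ∫⁻ x in s, (ENNReal.ofReal a * ENNReal.ofReal (F x) + ENNReal.ofReal b) ∂μ :=
        setLIntegral_mono' hs hpt
    _ = _ := by
        rw [lintegral_add_right _ measurable_const,
          lintegral_const_mul' _ _ ENNReal.ofReal_ne_top, setLIntegral_const]

/-- Estimate of the term `I₄` in the proof of the Lyapunov-functional proposition:
`|∫ e^{-2ps/(p-1)} g(...) v ρ| ≤ C e^{-s} ∫ ((w')²(1-y²) + v²/(1-y²) + w²) ρ + C e^{-s}`,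
with `C = C(p,M)`. -/
theorem g_term_integral_bound (p M : ℝ) (hp : 1 < p) (hM : 0 < M) :
    ∃ C : ℝ, 0 < C ∧
      ∀ g : ℝ → ℝ → ℝ → ℝ → ℝ, (∀ X t v z : ℝ, |g X t v z| ≤ M * (1 + |v| + |z|)) →
        ∀ r₀ : ℝ, 0 < r₀ → ∀ T₀ : ℝ, ∀ s : ℝ, 0 ≤ s →
          ∀ w v : ℝ → ℝ, ContDiffOn ℝ 1 w (Ioo (-1 : ℝ) 1) → Measurable v →
            ENNReal.ofReal
                |∫ y in Ioo (-1 : ℝ) 1,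
                  Real.exp (-2 * p * s / (p - 1)) *
                    g (r₀ + y * Real.exp (-s)) (T₀ - Real.exp (-s))
                      (Real.exp ((p + 1) * s / (p - 1)) * deriv w y)
                      (Real.exp ((p + 1) * s / (p - 1)) *
                        (v y + y * deriv w y + (2 / (p - 1)) * w y)) * v y * rho p y| ≤
              ENNReal.ofReal (C * Real.exp (-s)) *
                  (∫⁻ y in Ioo (-1 : ℝ) 1,
                    ENNReal.ofReal (((deriv w y) ^ 2 * (1 - y ^ 2)
                      + (v y) ^ 2 / (1 - y ^ 2) + (w y) ^ 2) * rho p y))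
                + ENNReal.ofReal (C * Real.exp (-s)) := by
  have hκ : 0 ≤ 2 / (p - 1) := div_nonneg zero_le_two (by linarith)
  refine ⟨2 * (M * (3 + 2 / (p - 1))), by positivity, fun g hg r₀ _ T₀ s hs w v _ _ => ?_⟩
  have hE := exp_neg_two_mul_div_mul_exp_add_one_mul_div hp.ne' s
  have hK : 1 ≤ exp ((p + 1) * s / (p - 1)) :=
    one_le_exp (div_nonneg (by nlinarith) (by linarith))
  have hpt := fun y (hy : y ∈ Ioo (-1 : ℝ) 1) =>
    hE ▸ abs_mul_growth_le (τ := 1 - y ^ 2) (d := deriv w y) (v := v y) (w := w y)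
      hM.le hκ (exp_pos _).le hK (by nlinarith [hy.1, hy.2]) (by nlinarith [hy.1, hy.2]) (rho_nonneg p hy) (rho_le_one hp.le hy)
      (abs_le.2 ⟨hy.1.le, hy.2.le⟩) (hg (r₀ + y * exp (-s)) (T₀ - exp (-s)) _ _)
  refine (ofReal_abs_setIntegral_le measurableSet_Ioo (by positivity) hpt).trans ?_
  rw [Real.volume_Ioo, ← ENNReal.ofReal_mul (by positivity)]
  have hC : 0 ≤ M * (3 + 2 / (p - 1)) * exp (-s) := by positivity
  exact add_le_add (mul_le_mul_left (ENNReal.ofReal_le_ofReal (by linarith)) _)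
    (ENNReal.ofReal_le_ofReal (by linarith))
end
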